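/- Let M be an affine irreducible algebraic monoid with unit group G, and let H ⊆ G be a subgroup that is observable in M. Then [k[M]]^H = [k[G]]^H = [k[G]^H] = [k[M]^H], where [A] denotes the quotient field of an integral domain A, k[M]^H and k[G]^H are the algebras of H-invariant regular functions (for the action (f·h)(m) = f(hm)), and [k[M]]^H, [k[G]]^H are the fields of H-invariant rational functions. -/
import Mathlib


open MvPolynomial

namespace AlgebraicMonoid

variable (k : Type) [Field k] [IsAlgClosed k] (n : ℕ)

/-- `n × n` matrices over `k`: the ambient affine space for linear algebraic monoids. -/
abbrev Mat := Matrix (Fin n) (Fin n) k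

/-- Polynomial functions on the space of `n × n` matrices. -/
abbrev MPoly := MvPolynomial (Fin n × Fin n) k

variable {k n}

/-- Evaluation of a polynomial at a matrix. -/
noncomputable def mEval (x : Mat k n) (p : MPoly k n) : k :=
  eval (fun ij => x ij.1 ij.2) p

/-- The (regular function induced by) `p` vanishes identically on `X`. -/
def VanishesOn (X : Set (Mat k n)) (p : MPoly k n) : Prop :=
  ∀ x ∈ X, mEval x p = 0

/-- Zariski closed subsets of matrix space. -/
def ZClosed (X : Set (Mat k n)) : Prop :=
  ∃ S : Set (MPoly k n), X = {x | ∀ p ∈ S, mEval x p = 0}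

/-- An affine (linear) algebraic monoid, realized as a Zariski closed submonoid of
matrix space (every affine algebraic monoid admits such a closed embedding). -/
structure IsAlgMonoid (M : Set (Mat k n)) : Prop where
  zclosed : ZClosed M
  one_mem : (1 : Mat k n) ∈ M
  mul_mem : ∀ a ∈ M, ∀ b ∈ M, a * b ∈ M

/-- The unit group `G(M)` of the monoid `M`. -/
def unitGroup (M : Set (Mat k n)) : Set (Mat k n) :=
  {g | g ∈ M ∧ ∃ h ∈ M, g * h = 1 ∧ h * g = 1}

/-- `H` is an (abstract) subgroup of `G`. -/
def IsSubgroupOf (H G : Set (Mat k n)) : Prop :=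
  H ⊆ G ∧ (1 : Mat k n) ∈ H ∧ (∀ a ∈ H, ∀ b ∈ H, a * b ∈ H) ∧
    ∀ a ∈ H, ∃ b ∈ H, a * b = 1 ∧ b * a = 1

/-- `Y` is closed in `X` (for the Zariski topology). -/
def IsClosedIn (Y X : Set (Mat k n)) : Prop :=
  Y ⊆ X ∧ ∃ C : Set (Mat k n), ZClosed C ∧ Y = C ∩ X

/-- `X` is irreducible: nonempty, and its vanishing ideal is prime. -/
def IrreducibleSet (X : Set (Mat k n)) : Prop :=
  X.Nonempty ∧ ∀ p q : MPoly k n, VanishesOn X (p * q) → VanishesOn X p ∨ VanishesOn X q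

/-- The action of `H` on `M` by left multiplication is observable: every nonzero
`H`-stable ideal of `k[M]` (presented as an ideal of the polynomial ring containing
the vanishing ideal of `M`) contains a nonzero `H`-invariant function.
Here `H` acts on `k[M]` by `(f · h)(m) = f (h * m)`. -/
def LeftObservable (H M : Set (Mat k n)) : Prop :=
  ∀ J : Ideal (MPoly k n),
    (∀ p : MPoly k n, VanishesOn M p → p ∈ J) →
    (∀ p ∈ J, ∀ h ∈ H, ∃ p' ∈ J, ∀ m ∈ M, mEval m p' = mEval (h * m) p) →
    (∃ p ∈ J, ¬ VanishesOn M p) →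
    ∃ p ∈ J, (¬ VanishesOn M p) ∧ ∀ h ∈ H, ∀ m ∈ M, mEval (h * m) p = mEval m p

/-- `χ` defines a character of (the monoid) `X`, i.e. a regular multiplicative map to `k`. -/
structure IsCharacterOn (X : Set (Mat k n)) (χ : MPoly k n) : Prop where
  map_one : mEval 1 χ = 1
  map_mul : ∀ a ∈ X, ∀ b ∈ X, mEval (a * b) χ = mEval a χ * mEval b χ

/-- The character `χ` of `H` is extendible to `M`: there is a nonzero
`H`-semiinvariant `f ∈ k[M]` of weight `χ`, i.e. `f(h m) = χ(h) f(m)`. -/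
def Extendible (M H : Set (Mat k n)) (χ : MPoly k n) : Prop :=
  ∃ f : MPoly k n, (¬ VanishesOn M f) ∧
    ∀ h ∈ H, ∀ m ∈ M, mEval (h * m) f = mEval h χ * mEval m f

/-- The matrix of regular functions `P` evaluated at `x`: a rational representation. -/
noncomputable def repApply {d : ℕ} (P : Matrix (Fin d) (Fin d) (MPoly k n)) (x : Mat k n) :
    Matrix (Fin d) (Fin d) k :=
  Matrix.of fun i j => mEval x (P i j)

/-- `P` defines a (finite dimensional rational) right `M`-module structure on `k^d`,
the action being `v · x = v ᵥ* (P x)`. -/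
def IsRightRep {d : ℕ} (M : Set (Mat k n)) (P : Matrix (Fin d) (Fin d) (MPoly k n)) : Prop :=
  repApply P 1 = 1 ∧ ∀ a ∈ M, ∀ b ∈ M, repApply P (a * b) = repApply P a * repApply P b


/-- `p` is `H`-invariant as a regular function on `X` (action `(f·h)(x) = f(hx)`). -/
def InvariantOn {k : Type} [Field k] {n : ℕ} (H X : Set (Mat k n)) (p : MPoly k n) : Prop :=
  ∀ h ∈ H, ∀ x ∈ X, mEval (h * x) p = mEval x p

/-- The rational functions `p/q` and `p'/q'` are equal on `X`. -/
def RatEqOn {k : Type} [Field k] {n : ℕ} (X : Set (Mat k n)) (p q p' q' : MPoly k n) : Prop :=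
  ∀ x ∈ X, mEval x p * mEval x q' = mEval x p' * mEval x q

/-- The rational function `p/q` is `H`-invariant on `X`. -/
def RatInvariantOn {k : Type} [Field k] {n : ℕ} (H X : Set (Mat k n)) (p q : MPoly k n) : Prop :=
  ∀ h ∈ H, ∀ x ∈ X, mEval (h * x) p * mEval x q = mEval x p * mEval (h * x) q

section Aux

variable {k : Type} [Field k] {n : ℕ}

@[simp] lemma mEval_add (x : Mat k n) (p q : MPoly k n) :
    mEval x (p + q) = mEval x p + mEval x q := by simp [mEval]

@[simp] lemma mEval_mul (x : Mat k n) (p q : MPoly k n) :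
    mEval x (p * q) = mEval x p * mEval x q := by simp [mEval]

@[simp] lemma mEval_sub (x : Mat k n) (p q : MPoly k n) :
    mEval x (p - q) = mEval x p - mEval x q := by simp [mEval]

@[simp] lemma mEval_zero (x : Mat k n) : mEval x (0 : MPoly k n) = 0 := by simp [mEval]

@[simp] lemma mEval_one (x : Mat k n) : mEval x (1 : MPoly k n) = 1 := by simp [mEval]

/-- Pullback of polynomial functions along left multiplication by `a`. -/
noncomputable def tau (a : Mat k n) : MPoly k n →ₐ[k] MPoly k n :=
  aeval fun ij => ∑ l, MvPolynomial.C (a ij.1 l) * MvPolynomial.X (l, ij.2)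

lemma mEval_tau (a x : Mat k n) (p : MPoly k n) : mEval x (tau a p) = mEval (a * x) p := by
  induction p using MvPolynomial.induction_on with
  | C c => simp [tau, mEval]
  | add p q hp hq => rw [map_add, mEval_add, hp, hq, mEval_add]
  | mul_X p ij hp =>
      rw [map_mul, mEval_mul, hp, mEval_mul]
      congr 1
      simp [tau, mEval, Matrix.mul_apply]

/-- The vanishing ideal of a set of matrices. -/
noncomputable def vanIdeal (T : Set (Mat k n)) : Ideal (MPoly k n) where
  carrier := {p | ∀ y ∈ T, mEval y p = 0}
  add_mem' := by
    intro p q hp hq y hy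
    rw [mEval_add, hp y hy, hq y hy, add_zero]
  zero_mem' := by intro y hy; exact mEval_zero y
  smul_mem' := by
    intro c p hp y hy
    rw [smul_eq_mul, mEval_mul, hp y hy, mul_zero]

lemma mem_vanIdeal {T : Set (Mat k n)} {p : MPoly k n} :
    p ∈ vanIdeal T ↔ ∀ y ∈ T, mEval y p = 0 := Iff.rfl

lemma pow_mem {M : Set (Mat k n)} (hM : IsAlgMonoid M) {x : Mat k n} (hx : x ∈ M) :
    ∀ m : ℕ, x ^ m ∈ M := by
  intro m
  induction m with
  | zero => simpa using hM.one_mem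
  | succ m ih => rw [pow_succ]; exact hM.mul_mem _ ih _ hx

lemma unitGroup_subset {M : Set (Mat k n)} : unitGroup M ⊆ M := fun _ hg => hg.1

/-- Every element of `M` that is invertible as a matrix is a unit of `M`. -/
lemma mem_unitGroup_of_isUnit_det {M : Set (Mat k n)} (hM : IsAlgMonoid M)
    {x : Mat k n} (hxM : x ∈ M) (hdet : IsUnit x.det) : x ∈ unitGroup M := by
  obtain ⟨S, hS⟩ := hM.zclosed
  have hinv_mul : x⁻¹ * x = 1 := Matrix.nonsing_inv_mul x hdet
  have hmul_inv : x * x⁻¹ = 1 := Matrix.mul_nonsing_inv x hdet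
  have hred : ∀ m : ℕ, x⁻¹ * x ^ (m + 1) = x ^ m := by
    intro m
    rw [pow_succ']
    rw [← mul_assoc, hinv_mul, one_mul]
  set L : ℕ → Ideal (MPoly k n) :=
    fun m => vanIdeal {y | ∃ j : ℕ, y = x⁻¹ * x ^ (m + j)} with hL
  have memL : ∀ (m : ℕ) (p : MPoly k n),
      p ∈ L m ↔ ∀ j : ℕ, mEval (x⁻¹ * x ^ (m + j)) p = 0 := by
    intro m p
    constructor
    · intro hp j; exact hp _ ⟨j, rfl⟩
    · rintro hp y ⟨j, rfl⟩; exact hp j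
  have Lmono : Monotone L := by
    apply monotone_nat_of_le_succ
    intro m p hp
    rw [memL] at hp ⊢
    intro j
    have := hp (j + 1)
    rwa [show m + (j + 1) = m + 1 + j by ring] at this
  have R2 : ∀ (m : ℕ) (p : MPoly k n), p ∈ L m ↔ tau x⁻¹ p ∈ L (m + 1) := by
    intro m p
    rw [memL, memL]
    have key : ∀ j : ℕ, mEval (x⁻¹ * x ^ (m + 1 + j)) (tau x⁻¹ p) =
        mEval (x⁻¹ * x ^ (m + j)) p := by
      intro j
      rw [mEval_tau]
      congr 1
      rw [show m + 1 + j = (m + j) + 1 by ring, hred (m + j)]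
    constructor
    · intro hp j; rw [key j]; exact hp j
    · intro hp j; have := hp j; rwa [key j] at this
  obtain ⟨N, hN⟩ := monotone_stabilizes_iff_noetherian.mpr
    (inferInstance : IsNoetherian (MPoly k n) (MPoly k n)) ⟨L, Lmono⟩
  have step : ∀ j : ℕ, L (j + 1) = L (j + 2) → L j = L (j + 1) := by
    intro j hstab
    refine le_antisymm (Lmono (Nat.le_succ j)) ?_
    intro p hp
    have h1 : tau x⁻¹ p ∈ L (j + 2) := (R2 (j + 1) p).mp hp
    rw [← hstab] at h1
    exact (R2 j p).mpr h1
  have aux : ∀ (d j : ℕ), L (j + d) = L (j + d + 1) → L j = L (j + 1) := by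
    intro d
    induction d with
    | zero => intro j h; simpa using h
    | succ d ih =>
        intro j h
        have h' : L (j + 1 + d) = L (j + 1 + d + 1) := by
          rw [show j + 1 + d = j + (d + 1) by ring]
          exact h
        exact step j (ih (j + 1) h')
  have h01 : L 0 = L 1 := by
    refine aux N 0 ?_
    have := hN (N + 1) (Nat.le_succ N)
    simpa using this
  have hxinvM : x⁻¹ ∈ M := by
    rw [hS]
    intro s hs
    have hsL1 : s ∈ L 1 := by
      rw [memL]
      intro j
      rw [show (1 : ℕ) + j = j + 1 by ring, hred j]
      have : x ^ j ∈ M := pow_mem hM hxM j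
      rw [hS] at this
      exact this s hs
    have hsL0 : s ∈ L 0 := by rw [h01]; exact hsL1
    have := (memL 0 s).mp hsL0 0
    simpa using this
  exact ⟨hxM, x⁻¹, hxinvM, hmul_inv, hinv_mul⟩

/-- The determinant as a polynomial function on matrix space. -/
noncomputable def detP : MPoly k n := (Matrix.of fun i j => (X (i, j) : MPoly k n)).det

lemma mEval_detP (x : Mat k n) : mEval x (detP : MPoly k n) = x.det := by
  show (eval fun ij => x ij.1 ij.2) (Matrix.of fun i j => (X (i, j) : MPoly k n)).det = x.det
  rw [RingHom.map_det]
  congr 1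
  ext i j
  simp [RingHom.mapMatrix_apply]

/-- Density of the unit group: a regular function vanishing on `G` vanishes on `M`. -/
lemma vanishesOn_of_unitGroup {M : Set (Mat k n)} (hM : IsAlgMonoid M)
    (hMirr : IrreducibleSet M) {r : MPoly k n}
    (hr : VanishesOn (unitGroup M) r) : VanishesOn M r := by
  have hd : VanishesOn M (r * detP) := by
    intro x hx
    rw [mEval_mul, mEval_detP]
    by_cases h0 : x.det = 0
    · rw [h0, mul_zero]
    · rw [hr x (mem_unitGroup_of_isUnit_det hM hx (isUnit_iff_ne_zero.mpr h0)), zero_mul]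
  rcases hMirr.2 r detP hd with h | h
  · exact h
  · exact absurd (h 1 hM.one_mem) (by rw [mEval_detP, Matrix.det_one]; exact one_ne_zero)

lemma vanish_of_tau_vanish {M : Set (Mat k n)} (hM : IsAlgMonoid M) {h : Mat k n}
    (hhG : h ∈ unitGroup M) {q : MPoly k n} (hv : VanishesOn M (tau h q)) :
    VanishesOn M q := by
  intro x hx
  obtain ⟨hhM, h', hh'M, h1, _⟩ := hhG
  have hx' : h' * x ∈ M := hM.mul_mem _ hh'M _ hx
  have := hv _ hx'
  rw [mEval_tau, ← mul_assoc, h1, one_mul] at this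
  exact this

end Aux
section Key

variable {k : Type} [Field k] {n : ℕ}

/-- The ideal of denominators of the rational function `p'/q'` on `M`. -/
noncomputable def denomIdeal (M : Set (Mat k n)) (p' q' : MPoly k n) : Ideal (MPoly k n) where
  carrier := {r | ∃ s : MPoly k n, ∀ x ∈ M, mEval x r * mEval x p' = mEval x s * mEval x q'}
  add_mem' := by
    rintro r₁ r₂ ⟨s₁, h₁⟩ ⟨s₂, h₂⟩
    exact ⟨s₁ + s₂, fun x hx => by
      rw [mEval_add, mEval_add, add_mul, add_mul, h₁ x hx, h₂ x hx]⟩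
  zero_mem' := ⟨0, fun x hx => by rw [mEval_zero, zero_mul, zero_mul]⟩
  smul_mem' := by
    rintro c r ⟨s, hs⟩
    exact ⟨c * s, fun x hx => by
      rw [smul_eq_mul, mEval_mul, mEval_mul, mul_assoc, hs x hx, mul_assoc]⟩

lemma mem_denomIdeal {M : Set (Mat k n)} {p' q' r : MPoly k n} :
    r ∈ denomIdeal M p' q' ↔
      ∃ s : MPoly k n, ∀ x ∈ M, mEval x r * mEval x p' = mEval x s * mEval x q' := Iff.rfl

/-- Key lemma: an `H`-invariant rational function on `M` is a quotient of `H`-invariant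
regular functions, by observability. -/
lemma key_lemma {M H : Set (Mat k n)} (hM : IsAlgMonoid M) (hMirr : IrreducibleSet M)
    (hH : IsSubgroupOf H (unitGroup M)) (hobs : LeftObservable H M)
    (p' q' : MPoly k n) (hq' : ¬ VanishesOn M q') (hinv : RatInvariantOn H M p' q') :
    ∃ a b : MPoly k n, InvariantOn H M a ∧ InvariantOn H M b ∧ (¬ VanishesOn M b) ∧
      RatEqOn M p' q' a b := by
  have hHG : ∀ h ∈ H, h ∈ unitGroup M := fun h hh => hH.1 hh
  have hHM : ∀ h ∈ H, h ∈ M := fun h hh => (hHG h hh).1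
  have htauq' : ∀ h ∈ H, ¬ VanishesOn M (tau h q') := by
    intro h hh hvan
    exact hq' (vanish_of_tau_vanish hM (hHG h hh) hvan)
  have h1 : ∀ p : MPoly k n, VanishesOn M p → p ∈ denomIdeal M p' q' :=
    fun p hp => ⟨0, fun x hx => by rw [hp x hx, zero_mul, mEval_zero, zero_mul]⟩
  have h2 : ∀ r ∈ denomIdeal M p' q', ∀ h ∈ H, ∃ r' ∈ denomIdeal M p' q',
      ∀ m ∈ M, mEval m r' = mEval (h * m) r := by
    rintro r ⟨s, hs⟩ h hh
    refine ⟨tau h r, ?_, fun m _ => mEval_tau h m r⟩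
    have hvan : VanishesOn M ((tau h r * p' - tau h s * q') * tau h q') := by
      intro x hx
      have hhx : h * x ∈ M := hM.mul_mem _ (hHM h hh) _ hx
      have A := hinv h hh x hx
      have B := hs (h * x) hhx
      rw [mEval_mul, mEval_sub, mEval_mul, mEval_mul, mEval_tau, mEval_tau, mEval_tau]
      linear_combination (-(mEval (h * x) r)) * A + (mEval x q') * B
    rcases hMirr.2 _ _ hvan with hv | hv
    · refine ⟨tau h s, fun x hx => ?_⟩
      have := hv x hx
      rw [mEval_sub, mEval_mul, mEval_mul, sub_eq_zero] at this
      exact this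
    · exact absurd hv (htauq' h hh)
  have h3 : ∃ r ∈ denomIdeal M p' q', ¬ VanishesOn M r :=
    ⟨q', ⟨p', fun x hx => mul_comm _ _⟩, hq'⟩
  obtain ⟨b, hbJ, hbV, hbinv⟩ := hobs (denomIdeal M p' q') h1 h2 h3
  obtain ⟨a, ha⟩ := hbJ
  refine ⟨a, b, ?_, hbinv, hbV, fun x hx => by rw [← ha x hx]; ring⟩
  intro h hh
  have hvan : VanishesOn M ((tau h a - a) * (q' * tau h q')) := by
    intro x hx
    have hhx : h * x ∈ M := hM.mul_mem _ (hHM h hh) _ hx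
    have A := hinv h hh x hx
    have e1 := ha (h * x) hhx
    have e2 := ha x hx
    have e3 := hbinv h hh x hx
    rw [mEval_mul, mEval_sub, mEval_mul, mEval_tau, mEval_tau]
    linear_combination (-(mEval x q')) * e1 + (mEval (h * x) q') * e2
      + (mEval x b) * A + (mEval x q' * mEval (h * x) p') * e3
  rcases hMirr.2 _ _ hvan with hv | hv
  · intro x hx
    have := hv x hx
    rw [mEval_sub, mEval_tau, sub_eq_zero] at this
    exact this
  · rcases hMirr.2 _ _ hv with hv' | hv'
    · exact absurd hv' hq'
    · exact absurd hv' (htauq' h hh)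

end Key
/-- Let `M` be an affine irreducible algebraic monoid with unit group
`G`, and let `H ⊆ G` be a subgroup observable in `M`.  Then, inside the common field of
rational functions (elements being represented by pairs `(p, q)` of polynomials with
`q` not identically zero on `M`), one has
`[k[M]]^H = [k[G]]^H = [k[G]^H] = [k[M]^H]`. -/
theorem invariant_function_fields_eq
    {k : Type} [Field k] [IsAlgClosed k] {n : ℕ}
    (M H : Set (Mat k n)) (hM : IsAlgMonoid M) (hMirr : IrreducibleSet M)
    (hH : IsSubgroupOf H (unitGroup M))
    (hobs : LeftObservable H M) :
    ∀ p q : MPoly k n, ¬ VanishesOn M q →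
      -- `p/q ∈ [k[M]]^H`
      ((∃ p' q' : MPoly k n, (¬ VanishesOn M q') ∧ RatInvariantOn H M p' q' ∧
          RatEqOn M p q p' q') ↔
        -- `p/q ∈ [k[G]]^H`
        (∃ p' q' : MPoly k n, (¬ VanishesOn (unitGroup M) q') ∧
          RatInvariantOn H (unitGroup M) p' q' ∧ RatEqOn (unitGroup M) p q p' q')) ∧
      -- `[k[G]]^H = [k[G]^H]`
      ((∃ p' q' : MPoly k n, (¬ VanishesOn (unitGroup M) q') ∧
          RatInvariantOn H (unitGroup M) p' q' ∧ RatEqOn (unitGroup M) p q p' q') ↔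
        (∃ u₁ s₁ u₂ s₂ : MPoly k n,
          (∀ g ∈ unitGroup M, mEval g s₁ ≠ 0) ∧ (∀ g ∈ unitGroup M, mEval g s₂ ≠ 0) ∧
          RatInvariantOn H (unitGroup M) u₁ s₁ ∧ RatInvariantOn H (unitGroup M) u₂ s₂ ∧
          (¬ VanishesOn (unitGroup M) u₂) ∧
          RatEqOn (unitGroup M) p q (u₁ * s₂) (s₁ * u₂))) ∧
      -- `[k[G]^H] = [k[M]^H]`
      ((∃ u₁ s₁ u₂ s₂ : MPoly k n,
          (∀ g ∈ unitGroup M, mEval g s₁ ≠ 0) ∧ (∀ g ∈ unitGroup M, mEval g s₂ ≠ 0) ∧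
          RatInvariantOn H (unitGroup M) u₁ s₁ ∧ RatInvariantOn H (unitGroup M) u₂ s₂ ∧
          (¬ VanishesOn (unitGroup M) u₂) ∧
          RatEqOn (unitGroup M) p q (u₁ * s₂) (s₁ * u₂)) ↔
        (∃ a b : MPoly k n, InvariantOn H M a ∧ InvariantOn H M b ∧
          (¬ VanishesOn M b) ∧ RatEqOn M p q a b)) := by
  intro p q hq
  -- S1 : M-rational-invariant representation, S2 : G-version,
  -- S3 : quotient of invariants of k[G], S4 : quotient of invariants of k[M].
  have S21 : (∃ p' q' : MPoly k n, (¬ VanishesOn (unitGroup M) q') ∧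
      RatInvariantOn H (unitGroup M) p' q' ∧ RatEqOn (unitGroup M) p q p' q') →
      (∃ p' q' : MPoly k n, (¬ VanishesOn M q') ∧ RatInvariantOn H M p' q' ∧
        RatEqOn M p q p' q') := by
    rintro ⟨p', q', hq', hinv, heq⟩
    refine ⟨p', q', ?_, ?_, ?_⟩
    · intro hvan; exact hq' fun x hx => hvan x (unitGroup_subset hx)
    · intro h hh
      have hv : VanishesOn M (tau h p' * q' - p' * tau h q') := by
        apply vanishesOn_of_unitGroup hM hMirr
        intro x hx
        rw [mEval_sub, mEval_mul, mEval_mul, mEval_tau, mEval_tau, hinv h hh x hx, sub_self]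
      intro x hx
      have := hv x hx
      rw [mEval_sub, mEval_mul, mEval_mul, mEval_tau, mEval_tau, sub_eq_zero] at this
      exact this
    · have hv : VanishesOn M (p * q' - p' * q) := by
        apply vanishesOn_of_unitGroup hM hMirr
        intro x hx
        rw [mEval_sub, mEval_mul, mEval_mul, heq x hx, sub_self]
      intro x hx
      have := hv x hx
      rw [mEval_sub, mEval_mul, mEval_mul, sub_eq_zero] at this
      exact this
  have S12 : (∃ p' q' : MPoly k n, (¬ VanishesOn M q') ∧ RatInvariantOn H M p' q' ∧
      RatEqOn M p q p' q') →
      (∃ p' q' : MPoly k n, (¬ VanishesOn (unitGroup M) q') ∧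
        RatInvariantOn H (unitGroup M) p' q' ∧ RatEqOn (unitGroup M) p q p' q') := by
    rintro ⟨p', q', hq', hinv, heq⟩
    refine ⟨p', q', ?_, ?_, ?_⟩
    · intro hvan; exact hq' (vanishesOn_of_unitGroup hM hMirr hvan)
    · intro h hh x hx; exact hinv h hh x (unitGroup_subset hx)
    · intro x hx; exact heq x (unitGroup_subset hx)
  have S14 : (∃ p' q' : MPoly k n, (¬ VanishesOn M q') ∧ RatInvariantOn H M p' q' ∧
      RatEqOn M p q p' q') →
      (∃ a b : MPoly k n, InvariantOn H M a ∧ InvariantOn H M b ∧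
        (¬ VanishesOn M b) ∧ RatEqOn M p q a b) := by
    rintro ⟨p', q', hq', hinv, heq⟩
    obtain ⟨a, b, haI, hbI, hbV, hab⟩ := key_lemma hM hMirr hH hobs p' q' hq' hinv
    refine ⟨a, b, haI, hbI, hbV, ?_⟩
    have hv : VanishesOn M ((p * b - a * q) * q') := by
      intro x hx
      have E1 := heq x hx
      have E2 := hab x hx
      rw [mEval_mul, mEval_sub, mEval_mul, mEval_mul]
      linear_combination (mEval x b) * E1 + (mEval x q) * E2
    rcases hMirr.2 _ _ hv with h | h
    · intro x hx
      have := h x hx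
      rw [mEval_sub, mEval_mul, mEval_mul, sub_eq_zero] at this
      exact this
    · exact absurd h hq'
  have S43 : (∃ a b : MPoly k n, InvariantOn H M a ∧ InvariantOn H M b ∧
      (¬ VanishesOn M b) ∧ RatEqOn M p q a b) →
      (∃ u₁ s₁ u₂ s₂ : MPoly k n,
        (∀ g ∈ unitGroup M, mEval g s₁ ≠ 0) ∧ (∀ g ∈ unitGroup M, mEval g s₂ ≠ 0) ∧
        RatInvariantOn H (unitGroup M) u₁ s₁ ∧ RatInvariantOn H (unitGroup M) u₂ s₂ ∧
        (¬ VanishesOn (unitGroup M) u₂) ∧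
        RatEqOn (unitGroup M) p q (u₁ * s₂) (s₁ * u₂)) := by
    rintro ⟨a, b, haI, hbI, hbV, hab⟩
    refine ⟨a, 1, b, 1, ?_, ?_, ?_, ?_, ?_, ?_⟩
    · intro g _; rw [mEval_one]; exact one_ne_zero
    · intro g _; rw [mEval_one]; exact one_ne_zero
    · intro h hh x hx
      rw [mEval_one, mEval_one, mul_one, mul_one]
      exact haI h hh x (unitGroup_subset hx)
    · intro h hh x hx
      rw [mEval_one, mEval_one, mul_one, mul_one]
      exact hbI h hh x (unitGroup_subset hx)
    · intro hvan; exact hbV (vanishesOn_of_unitGroup hM hMirr hvan)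
    · intro x hx
      simp only [mEval_mul, mEval_one, mul_one, one_mul]
      exact hab x (unitGroup_subset hx)
  have S32 : (∃ u₁ s₁ u₂ s₂ : MPoly k n,
      (∀ g ∈ unitGroup M, mEval g s₁ ≠ 0) ∧ (∀ g ∈ unitGroup M, mEval g s₂ ≠ 0) ∧
      RatInvariantOn H (unitGroup M) u₁ s₁ ∧ RatInvariantOn H (unitGroup M) u₂ s₂ ∧
      (¬ VanishesOn (unitGroup M) u₂) ∧
      RatEqOn (unitGroup M) p q (u₁ * s₂) (s₁ * u₂)) →
      (∃ p' q' : MPoly k n, (¬ VanishesOn (unitGroup M) q') ∧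
        RatInvariantOn H (unitGroup M) p' q' ∧ RatEqOn (unitGroup M) p q p' q') := by
    rintro ⟨u₁, s₁, u₂, s₂, hs₁, hs₂, hi₁, hi₂, hu₂, heq⟩
    refine ⟨u₁ * s₂, s₁ * u₂, ?_, ?_, heq⟩
    · intro hvan
      apply hu₂
      intro g hg
      have := hvan g hg
      rw [mEval_mul] at this
      rcases mul_eq_zero.mp this with h0 | h0
      · exact absurd h0 (hs₁ g hg)
      · exact h0
    · intro h hh x hx
      have A := hi₁ h hh x hx
      have B := hi₂ h hh x hx
      rw [mEval_mul, mEval_mul, mEval_mul, mEval_mul]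
      linear_combination (mEval (h * x) s₂ * mEval x u₂) * A
        - (mEval x u₁ * mEval (h * x) s₁) * B
  exact ⟨⟨S12, S21⟩, ⟨fun h2 => S43 (S14 (S21 h2)), S32⟩,
    ⟨fun h3 => S14 (S21 (S32 h3)), S43⟩⟩

end AlgebraicMonoid
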